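/- Let M = U ×_f V be a warped product whose metric g is super generalized recurrent (SGK_n) with associated 1-forms (Π, Φ, Ψ, Θ). Then at every point x ∈ M at which df ≠ 0 (i.e. f_a ≠ 0 at x for some a ∈ {1,…,p}), the fiber metric g̃ is of constant curvature at x: there exists a real number c such that R̃_{αβγδ} = c G̃_{αβγδ} at x for all indices α,β,γ,δ, where G̃_{αβγδ} = g̃_{αδ} g̃_{βγ} − g̃_{αγ} g̃_{βδ}. -/

import Mathlib

noncomputable section

/-- Partial derivative of a scalar function along the `j`-th coordinate direction. -/
def pd {k : ℕ} (F : (Fin k → ℝ) → ℝ) (j : Fin k) (x : Fin k → ℝ) : ℝ :=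
  fderiv ℝ F x (Pi.single j 1)

/-- Christoffel symbols `Γ^i_{jl}` of a metric `h` with (pointwise) inverse `hinv`. -/
def Christoffel {k : ℕ} (h hinv : (Fin k → ℝ) → Fin k → Fin k → ℝ)
    (i j l : Fin k) (x : Fin k → ℝ) : ℝ :=
  (1 / 2) * ∑ r, hinv x i r *
    (pd (fun y => h y r l) j x + pd (fun y => h y j r) l x - pd (fun y => h y j l) r x)

/-- The (0,4) Riemann-Christoffel curvature tensor of `h`. -/
def Riem {k : ℕ} (h hinv : (Fin k → ℝ) → Fin k → Fin k → ℝ)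
    (x : Fin k → ℝ) (i j s l : Fin k) : ℝ :=
  ∑ r, h x i r *
    (pd (Christoffel h hinv r l j) s x - pd (Christoffel h hinv r s j) l x
      + (∑ t, Christoffel h hinv r s t x * Christoffel h hinv t l j x)
      - ∑ t, Christoffel h hinv r l t x * Christoffel h hinv t s j x)

/-- The Ricci tensor of `h`. -/
def Ric {k : ℕ} (h hinv : (Fin k → ℝ) → Fin k → Fin k → ℝ)
    (x : Fin k → ℝ) (j l : Fin k) : ℝ :=
  ∑ i, ∑ s, hinv x i s * Riem h hinv x i j s l

/-- The scalar curvature of `h`. -/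
def Scal {k : ℕ} (h hinv : (Fin k → ℝ) → Fin k → Fin k → ℝ) (x : Fin k → ℝ) : ℝ :=
  ∑ j, ∑ l, hinv x j l * Ric h hinv x j l

/-- Covariant derivative (w.r.t. the Levi-Civita connection of `h`) of a (0,4) tensor field. -/
def cov4 {k : ℕ} (h hinv : (Fin k → ℝ) → Fin k → Fin k → ℝ)
    (T : (Fin k → ℝ) → Fin k → Fin k → Fin k → Fin k → ℝ)
    (x : Fin k → ℝ) (i j s l m : Fin k) : ℝ :=
  pd (fun y => T y i j s l) m x
    - (∑ r, Christoffel h hinv r m i x * T x r j s l)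
    - (∑ r, Christoffel h hinv r m j x * T x i r s l)
    - (∑ r, Christoffel h hinv r m s x * T x i j r l)
    - ∑ r, Christoffel h hinv r m l x * T x i j s r

/-- Covariant derivative of a (0,2) tensor field. -/
def cov2 {k : ℕ} (h hinv : (Fin k → ℝ) → Fin k → Fin k → ℝ)
    (T : (Fin k → ℝ) → Fin k → Fin k → ℝ) (x : Fin k → ℝ) (i j m : Fin k) : ℝ :=
  pd (fun y => T y i j) m x
    - (∑ r, Christoffel h hinv r m i x * T x r j)
    - ∑ r, Christoffel h hinv r m j x * T x i r

/-- Kulkarni-Nomizu product of two (0,2) tensors. -/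
def KN {k : ℕ} (A E : (Fin k → ℝ) → Fin k → Fin k → ℝ)
    (x : Fin k → ℝ) (i j s l : Fin k) : ℝ :=
  A x i l * E x j s + A x j s * E x i l - A x i s * E x j l - A x j l * E x i s

/-- The Gaussian curvature tensor `G_{ijsl} = h_{il}h_{js} - h_{is}h_{jl}`. -/
def Gt {k : ℕ} (h : (Fin k → ℝ) → Fin k → Fin k → ℝ)
    (x : Fin k → ℝ) (i j s l : Fin k) : ℝ :=
  h x i l * h x j s - h x i s * h x j l

/-- The conformal (Weyl) curvature tensor of a `k`-dimensional metric `h`. -/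
def Weyl {k : ℕ} (h hinv : (Fin k → ℝ) → Fin k → Fin k → ℝ)
    (x : Fin k → ℝ) (i j s l : Fin k) : ℝ :=
  Riem h hinv x i j s l - (1 / ((k : ℝ) - 2)) * KN h (Ric h hinv) x i j s l
    + (Scal h hinv x / (2 * ((k : ℝ) - 1) * ((k : ℝ) - 2))) * KN h h x i j s l

/-- Recurrency condition at a point. -/
def Recur {k : ℕ} (h hinv : (Fin k → ℝ) → Fin k → Fin k → ℝ)
    (piF : (Fin k → ℝ) → Fin k → ℝ) (x : Fin k → ℝ) : Prop :=
  ∀ i j s l m, cov4 h hinv (Riem h hinv) x i j s l m = piF x m * Riem h hinv x i j s l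

/-- Hyper generalized recurrency condition at a point. -/
def HGK {k : ℕ} (h hinv : (Fin k → ℝ) → Fin k → Fin k → ℝ)
    (piF psiF : (Fin k → ℝ) → Fin k → ℝ) (x : Fin k → ℝ) : Prop :=
  ∀ i j s l m, cov4 h hinv (Riem h hinv) x i j s l m =
    piF x m * Riem h hinv x i j s l + psiF x m * KN h (Ric h hinv) x i j s l

/-- Weakly generalized recurrency condition at a point. -/
def WGK {k : ℕ} (h hinv : (Fin k → ℝ) → Fin k → Fin k → ℝ)
    (piF phiF : (Fin k → ℝ) → Fin k → ℝ) (x : Fin k → ℝ) : Prop :=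
  ∀ i j s l m, cov4 h hinv (Riem h hinv) x i j s l m =
    piF x m * Riem h hinv x i j s l
      + phiF x m * KN (Ric h hinv) (Ric h hinv) x i j s l

/-- Super generalized recurrency condition at a point. -/
def SGK {k : ℕ} (h hinv : (Fin k → ℝ) → Fin k → Fin k → ℝ)
    (piF phiF psiF thetaF : (Fin k → ℝ) → Fin k → ℝ) (x : Fin k → ℝ) : Prop :=
  ∀ i j s l m, cov4 h hinv (Riem h hinv) x i j s l m =
    piF x m * Riem h hinv x i j s l
      + phiF x m * KN (Ric h hinv) (Ric h hinv) x i j s l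
      + psiF x m * KN h (Ric h hinv) x i j s l
      + thetaF x m * KN h h x i j s l

/-- Base-point projection of a point of `M = U × V`. -/
def bpt {p q : ℕ} (z : Fin (p + q) → ℝ) : Fin p → ℝ := fun a => z (Fin.castAdd q a)

/-- Fiber-point projection of a point of `M = U × V`. -/
def fpt {p q : ℕ} (z : Fin (p + q) → ℝ) : Fin q → ℝ := fun a => z (Fin.natAdd p a)

/-- Block-diagonal combination of a base tensor `A` and a fiber tensor `B` scaled by `c`. -/
def wPair {p q : ℕ} (A : (Fin p → ℝ) → Fin p → Fin p → ℝ)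
    (B : (Fin q → ℝ) → Fin q → Fin q → ℝ) (c : (Fin p → ℝ) → ℝ)
    (z : Fin (p + q) → ℝ) (i j : Fin (p + q)) : ℝ :=
  Sum.elim
    (fun a => Sum.elim (fun b => A (bpt z) a b) (fun _ => (0 : ℝ)) (finSumFinEquiv.symm j))
    (fun a => Sum.elim (fun _ => (0 : ℝ)) (fun b => c (bpt z) * B (fpt z) a b)
      (finSumFinEquiv.symm j))
    (finSumFinEquiv.symm i)

/-- The warped product metric `g = ḡ ⊕ f g̃`. -/
def wMet {p q : ℕ} (gbar : (Fin p → ℝ) → Fin p → Fin p → ℝ)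
    (gtil : (Fin q → ℝ) → Fin q → Fin q → ℝ) (f : (Fin p → ℝ) → ℝ) :
    (Fin (p + q) → ℝ) → Fin (p + q) → Fin (p + q) → ℝ :=
  wPair gbar gtil f

/-- The inverse of the warped product metric. -/
def wMetInv {p q : ℕ} (gbinv : (Fin p → ℝ) → Fin p → Fin p → ℝ)
    (gtinv : (Fin q → ℝ) → Fin q → Fin q → ℝ) (f : (Fin p → ℝ) → ℝ) :
    (Fin (p + q) → ℝ) → Fin (p + q) → Fin (p + q) → ℝ :=
  wPair gbinv gtinv fun x => (f x)⁻¹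

/-- The set of points of `M = U × V` inside `ℝ^{p+q}`. -/
def Mset {p q : ℕ} (U : Set (Fin p → ℝ)) (V : Set (Fin q → ℝ)) : Set (Fin (p + q) → ℝ) :=
  {z | bpt z ∈ U ∧ fpt z ∈ V}

/-- The tensor `T_{ab} = -(1/(2f))(f_{a,b} - (1/(2f)) f_a f_b)`. -/
def Tten {p : ℕ} (gbar gbinv : (Fin p → ℝ) → Fin p → Fin p → ℝ) (f : (Fin p → ℝ) → ℝ)
    (x : Fin p → ℝ) (a b : Fin p) : ℝ :=
  -(1 / (2 * f x)) *
    ((pd (fun y => pd f a y) b x - ∑ c, Christoffel gbar gbinv c b a x * pd f c x)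
      - (1 / (2 * f x)) * pd f a x * pd f b x)

/-- `tr T = ḡ^{ab} T_{ab}`. -/
def trT {p : ℕ} (gbar gbinv : (Fin p → ℝ) → Fin p → Fin p → ℝ) (f : (Fin p → ℝ) → ℝ)
    (x : Fin p → ℝ) : ℝ :=
  ∑ a, ∑ b, gbinv x a b * Tten gbar gbinv f x a b

/-- `P = (1/(4f²)) ḡ^{ab} f_a f_b`. -/
def Pw {p : ℕ} (gbinv : (Fin p → ℝ) → Fin p → Fin p → ℝ) (f : (Fin p → ℝ) → ℝ)
    (x : Fin p → ℝ) : ℝ :=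
  (1 / (4 * f x ^ 2)) * ∑ a, ∑ b, gbinv x a b * pd f a x * pd f b x

/-- `Q = f((n-p-1)P - tr T)`, with `n - p = q`. -/
def Qw {p : ℕ} (q : ℕ) (gbar gbinv : (Fin p → ℝ) → Fin p → Fin p → ℝ)
    (f : (Fin p → ℝ) → ℝ) (x : Fin p → ℝ) : ℝ :=
  f x * (((q : ℝ) - 1) * Pw gbinv f x - trT gbar gbinv f x)

/-!
In the block-diagonal metric `g = ḡ ⊕ f g̃` the only nonzero mixed Christoffel symbols are
`Γ^γ_{aβ} = Γ^γ_{βa} = δ^γ_β f_a / (2f)` and `Γ^c_{αβ} = -½ λ^c g̃_{αβ}`, where `λ^c = ḡ^{cb} f_b`.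
Hence `R_{aαβγ} = R_{abβγ} = 0`, the mixed Ricci components `S_{aγ}` vanish,
`R_{aαbγ} = κ_{ab} g̃_{αγ}` for an explicit `κ`, and `R_{αβγδ} = f R̃_{αβγδ} + f² P G̃_{αβγδ}`.
In the SGK identity with one base index `a` and four fiber indices every Kulkarni–Nomizu product
contains a mixed component of `g` or `S`, so the right-hand side vanishes; on the left only the
connection terms survive, and they give `f_a R_{αβγδ} = -f λ^b κ_{ab} G̃_{αβγδ}`.
Where `f_a ≠ 0` this makes `R̃` a multiple of `G̃`.
-/

open Finset

section CoordinateCalculus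

variable {k : ℕ}

theorem pd_congr_of_eqOn {F G : (Fin k → ℝ) → ℝ} {s : Set (Fin k → ℝ)} (hs : IsOpen s)
    {x : Fin k → ℝ} (hx : x ∈ s) (h : Set.EqOn F G s) (j : Fin k) : pd F j x = pd G j x := by
  rw [pd, pd, (Filter.eventuallyEq_of_mem (hs.mem_nhds hx) h).fderiv_eq]

theorem pd_const (c : ℝ) (j : Fin k) (x : Fin k → ℝ) : pd (fun _ => c) j x = 0 := by
  simp [pd]

theorem pd_eq_zero_of_eqOn {F : (Fin k → ℝ) → ℝ} {s : Set (Fin k → ℝ)} (hs : IsOpen s)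
    {x : Fin k → ℝ} (hx : x ∈ s) (h : ∀ y ∈ s, F y = 0) (j : Fin k) : pd F j x = 0 := by
  rw [pd_congr_of_eqOn hs hx h j, pd_const]

theorem pd_mul {F G : (Fin k → ℝ) → ℝ} {x : Fin k → ℝ} (hF : DifferentiableAt ℝ F x)
    (hG : DifferentiableAt ℝ G x) (j : Fin k) :
    pd (fun y => F y * G y) j x = pd F j x * G x + F x * pd G j x := by
  simp only [pd, fderiv_fun_mul hF hG, add_apply, smul_apply, smul_eq_mul]
  ring

theorem pd_const_mul {F : (Fin k → ℝ) → ℝ} {x : Fin k → ℝ} (c : ℝ) (j : Fin k) :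
    pd (fun y => c * F y) j x = c * pd F j x := by
  change fderiv ℝ (c • F) x _ = _
  rw [fderiv_const_smul_field]
  rfl

theorem differentiableAt_pd {n : WithTop ℕ∞} {G : (Fin k → ℝ) → ℝ} {s : Set (Fin k → ℝ)}
    (hs : IsOpen s) (hG : ContDiffOn ℝ n G s) (hn : 2 ≤ n) (j : Fin k) {x : Fin k → ℝ}
    (hx : x ∈ s) : DifferentiableAt ℝ (pd G j) x :=
  ((hG.fderiv_of_isOpen hs (m := 1) hn).clm_apply contDiffOn_const).differentiableOn one_ne_zero
    |>.differentiableAt (hs.mem_nhds hx)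

end CoordinateCalculus

section MatrixInverse

variable {E : Type*} [NormedAddCommGroup E] [NormedSpace ℝ E] {ι : Type*} [Fintype ι]
  [DecidableEq ι] {n : WithTop ℕ∞} {s : Set E}

theorem contDiffOn_det {A : E → Matrix ι ι ℝ} (hA : ∀ i j, ContDiffOn ℝ n (fun x => A x i j) s) :
    ContDiffOn ℝ n (fun x => (A x).det) s := by
  simp only [Matrix.det_apply']
  exact ContDiffOn.sum fun σ _ => contDiffOn_const.mul (contDiffOn_prod fun i _ => hA (σ i) i)

theorem contDiffOn_adjugate {A : E → Matrix ι ι ℝ}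
    (hA : ∀ i j, ContDiffOn ℝ n (fun x => A x i j) s) (a b : ι) :
    ContDiffOn ℝ n (fun x => (A x).adjugate a b) s := by
  simp only [Matrix.adjugate_apply]
  refine contDiffOn_det fun i j => ?_
  simp only [Matrix.updateRow_apply]
  split_ifs
  · exact contDiffOn_const
  · exact hA i j

theorem contDiffOn_of_mul_eq_one {A B : E → Matrix ι ι ℝ}
    (hA : ∀ i j, ContDiffOn ℝ n (fun x => A x i j) s) (hAB : ∀ x ∈ s, A x * B x = 1)
    (a b : ι) : ContDiffOn ℝ n (fun x => B x a b) s := by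
  have hdet : ∀ x ∈ s, (A x).det ≠ 0 := fun x hx =>
    left_ne_zero_of_mul_eq_one (by rw [← Matrix.det_mul, hAB x hx, Matrix.det_one])
  refine ((contDiffOn_det hA).inv hdet).mul (contDiffOn_adjugate hA a b) |>.congr fun x hx => ?_
  rw [← Matrix.inv_eq_right_inv (hAB x hx), Matrix.inv_def, Ring.inverse_eq_inv']
  rfl

end MatrixInverse

theorem sum_mul_eq_ite_comm {ι : Type*} [Fintype ι] [DecidableEq ι] {A B : ι → ι → ℝ}
    (h : ∀ a b, ∑ c, A a c * B c b = if a = b then 1 else 0) (a b : ι) :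
    ∑ c, B a c * A c b = if a = b then 1 else 0 := by
  have hAB : Matrix.of A * Matrix.of B = 1 := by
    ext a b
    simpa [Matrix.mul_apply, Matrix.one_apply] using h a b
  have hBA : Matrix.of B * Matrix.of A = 1 := mul_eq_one_comm.mp hAB
  simpa [Matrix.mul_apply, Matrix.one_apply] using congr_fun₂ hBA a b

section LeviCivita

variable {k : ℕ} {h hinv : (Fin k → ℝ) → Fin k → Fin k → ℝ} {x : Fin k → ℝ}

theorem christoffel_comm {s : Set (Fin k → ℝ)} (hs : IsOpen s)
    (hsymm : ∀ y ∈ s, ∀ i j, h y i j = h y j i) (hx : x ∈ s) (i j l : Fin k) :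
    Christoffel h hinv i j l x = Christoffel h hinv i l j x := by
  have hpd : ∀ a b c, pd (fun y => h y a b) c x = pd (fun y => h y b a) c x :=
    fun a b c => pd_congr_of_eqOn hs hx (fun y hy => hsymm y hy a b) c
  simp only [Christoffel]
  congr 1
  refine sum_congr rfl fun r _ => ?_
  rw [hpd r l, hpd j r, hpd j l]
  ring

theorem sum_mul_christoffel (hx : ∀ i j, ∑ r, h x i r * hinv x r j = if i = j then 1 else 0)
    (i j l : Fin k) :
    ∑ r, h x i r * Christoffel h hinv r j l x
      = (1 / 2) * (pd (fun y => h y i l) j x + pd (fun y => h y j i) l x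
          - pd (fun y => h y j l) i x) := by
  calc _ = (1 / 2) * ∑ t, (∑ r, h x i r * hinv x r t) *
        (pd (fun y => h y t l) j x + pd (fun y => h y j t) l x - pd (fun y => h y j l) t x) := by
        simp only [Christoffel, mul_sum, sum_mul]
        rw [sum_comm]
        exact sum_congr rfl fun _ _ => sum_congr rfl fun _ _ => by ring
    _ = _ := by simp [hx]

theorem riem_antisymm (h hinv : (Fin k → ℝ) → Fin k → Fin k → ℝ) (x : Fin k → ℝ)
    (i j s l : Fin k) : Riem h hinv x i j l s = -Riem h hinv x i j s l := by
  simp only [Riem, ← sum_neg_distrib]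
  refine sum_congr rfl fun r _ => ?_
  ring

end LeviCivita

-- `φ` need not be differentiable: otherwise neither is `φ ∘ L`, as `φ = (φ ∘ L) ∘ σ`.
theorem fderiv_comp_clm_of_rightInverse {E F G : Type*} [NormedAddCommGroup E] [NormedSpace ℝ E]
    [NormedAddCommGroup F] [NormedSpace ℝ F] [NormedAddCommGroup G] [NormedSpace ℝ G]
    (φ : F → G) (L : E →L[ℝ] F) {σ : F → E} {x : E} (hσ : DifferentiableAt ℝ σ (L x))
    (hσx : σ (L x) = x) (hLσ : ∀ y, L (σ y) = y) :
    fderiv ℝ (φ ∘ L) x = (fderiv ℝ φ (L x)).comp L := by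
  by_cases hφ : DifferentiableAt ℝ φ (L x)
  · rw [fderiv_comp x hφ L.differentiableAt, L.fderiv]
  · have hφL : ¬DifferentiableAt ℝ (φ ∘ L) x := fun hφL => hφ <| by
      have := (hσx ▸ hφL).comp (L x) hσ
      simpa [Function.comp_def, hLσ] using this
    rw [fderiv_zero_of_not_differentiableAt hφL, fderiv_zero_of_not_differentiableAt hφ,
      ContinuousLinearMap.zero_comp]

section Projections

variable {p q : ℕ}

def bptL (p q : ℕ) : (Fin (p + q) → ℝ) →L[ℝ] (Fin p → ℝ) :=
  ContinuousLinearMap.pi fun a => ContinuousLinearMap.proj (Fin.castAdd q a)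

def fptL (p q : ℕ) : (Fin (p + q) → ℝ) →L[ℝ] (Fin q → ℝ) :=
  ContinuousLinearMap.pi fun α => ContinuousLinearMap.proj (Fin.natAdd p α)

theorem isOpen_Mset {U : Set (Fin p → ℝ)} {V : Set (Fin q → ℝ)} (hU : IsOpen U)
    (hV : IsOpen V) : IsOpen (Mset U V) :=
  (hU.preimage (bptL p q).continuous).inter (hV.preimage (fptL p q).continuous)

theorem differentiable_append_left (w : Fin q → ℝ) :
    Differentiable ℝ fun v : Fin p → ℝ => Fin.append v w := by
  refine differentiable_pi.2 fun i => ?_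
  induction i using Fin.addCases with
  | left a => simpa only [Fin.append_left] using differentiable_apply a
  | right α => simpa only [Fin.append_right] using differentiable_const _

theorem differentiable_append_right (v : Fin p → ℝ) :
    Differentiable ℝ fun w : Fin q → ℝ => Fin.append v w := by
  refine differentiable_pi.2 fun i => ?_
  induction i using Fin.addCases with
  | left a => simpa only [Fin.append_left] using differentiable_const _
  | right α => simpa only [Fin.append_right] using differentiable_apply α

theorem pd_comp_bpt (F : (Fin p → ℝ) → ℝ) (z : Fin (p + q) → ℝ) (j : Fin (p + q)) :
    pd (fun y => F (bpt y)) j z = fderiv ℝ F (bpt z) (bptL p q (Pi.single j 1)) := by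
  have := fderiv_comp_clm_of_rightInverse F (bptL p q) (differentiable_append_left (fpt z) _)
    Fin.append_castAdd_natAdd fun v => funext fun a => Fin.append_left v (fpt z) a
  exact congrArg (· (Pi.single j 1)) this

theorem pd_comp_fpt (F : (Fin q → ℝ) → ℝ) (z : Fin (p + q) → ℝ) (j : Fin (p + q)) :
    pd (fun y => F (fpt y)) j z = fderiv ℝ F (fpt z) (fptL p q (Pi.single j 1)) := by
  have := fderiv_comp_clm_of_rightInverse F (fptL p q) (differentiable_append_right (bpt z) _)
    Fin.append_castAdd_natAdd fun w => funext fun α => Fin.append_right (bpt z) w α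
  exact congrArg (· (Pi.single j 1)) this

theorem pd_comp_bpt_castAdd (F : (Fin p → ℝ) → ℝ) (z : Fin (p + q) → ℝ) (a : Fin p) :
    pd (fun y => F (bpt y)) (Fin.castAdd q a) z = pd F a (bpt z) := by
  rw [pd_comp_bpt, pd]
  congr 1
  ext b
  simp [bptL, Pi.single_apply]

theorem pd_comp_bpt_natAdd (F : (Fin p → ℝ) → ℝ) (z : Fin (p + q) → ℝ) (α : Fin q) :
    pd (fun y => F (bpt y)) (Fin.natAdd p α) z = 0 := by
  rw [pd_comp_bpt]
  convert map_zero (fderiv ℝ F (bpt z))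
  ext b
  simp [bptL, Pi.single_apply, Fin.ext_iff]
  omega

theorem pd_comp_fpt_castAdd (F : (Fin q → ℝ) → ℝ) (z : Fin (p + q) → ℝ) (a : Fin p) :
    pd (fun y => F (fpt y)) (Fin.castAdd q a) z = 0 := by
  rw [pd_comp_fpt]
  convert map_zero (fderiv ℝ F (fpt z))
  ext β
  simp [fptL, Pi.single_apply, Fin.ext_iff]
  omega

theorem pd_comp_fpt_natAdd (F : (Fin q → ℝ) → ℝ) (z : Fin (p + q) → ℝ) (α : Fin q) :
    pd (fun y => F (fpt y)) (Fin.natAdd p α) z = pd F α (fpt z) := by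
  rw [pd_comp_fpt, pd]
  congr 1
  ext β
  simp [fptL, Pi.single_apply]

variable {F : (Fin p → ℝ) → ℝ} {G : (Fin q → ℝ) → ℝ} {z : Fin (p + q) → ℝ}

theorem DifferentiableAt.comp_bpt (hF : DifferentiableAt ℝ F (bpt z)) :
    DifferentiableAt ℝ (fun y => F (bpt y)) z :=
  hF.comp z (bptL p q).differentiableAt

theorem DifferentiableAt.comp_fpt (hG : DifferentiableAt ℝ G (fpt z)) :
    DifferentiableAt ℝ (fun y => G (fpt y)) z :=
  hG.comp z (fptL p q).differentiableAt

theorem pd_mul_comp_castAdd (hF : DifferentiableAt ℝ F (bpt z))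
    (hG : DifferentiableAt ℝ G (fpt z)) (a : Fin p) :
    pd (fun y => F (bpt y) * G (fpt y)) (Fin.castAdd q a) z = pd F a (bpt z) * G (fpt z) := by
  rw [pd_mul hF.comp_bpt hG.comp_fpt,
    pd_comp_bpt_castAdd, pd_comp_fpt_castAdd, mul_zero, add_zero]

theorem pd_mul_comp_natAdd (hF : DifferentiableAt ℝ F (bpt z))
    (hG : DifferentiableAt ℝ G (fpt z)) (α : Fin q) :
    pd (fun y => F (bpt y) * G (fpt y)) (Fin.natAdd p α) z = F (bpt z) * pd G α (fpt z) := by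
  rw [pd_mul hF.comp_bpt hG.comp_fpt,
    pd_comp_bpt_natAdd, pd_comp_fpt_natAdd, zero_mul, zero_add]

end Projections

theorem kn_base_fiber_fiber_fiber {p q : ℕ}
    {A E : (Fin (p + q) → ℝ) → Fin (p + q) → Fin (p + q) → ℝ} {z : Fin (p + q) → ℝ} {a : Fin p}
    (hA : ∀ β, A z (Fin.castAdd q a) (Fin.natAdd p β) = 0)
    (hE : ∀ β, E z (Fin.castAdd q a) (Fin.natAdd p β) = 0) (α β γ : Fin q) :
    KN A E z (Fin.castAdd q a) (Fin.natAdd p α) (Fin.natAdd p β) (Fin.natAdd p γ) = 0 := by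
  simp [KN, hA, hE]

structure WarpedProductData (p q : ℕ) where
  U : Set (Fin p → ℝ)
  V : Set (Fin q → ℝ)
  isOpen_U : IsOpen U
  isOpen_V : IsOpen V
  gbar : (Fin p → ℝ) → Fin p → Fin p → ℝ
  gbinv : (Fin p → ℝ) → Fin p → Fin p → ℝ
  gtil : (Fin q → ℝ) → Fin q → Fin q → ℝ
  gtinv : (Fin q → ℝ) → Fin q → Fin q → ℝ
  f : (Fin p → ℝ) → ℝ
  contDiffOn_gbar : ∀ a b, ContDiffOn ℝ (⊤ : ℕ∞) (fun x => gbar x a b) U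
  gbar_mul_gbinv : ∀ x ∈ U, ∀ a b, (∑ c, gbar x a c * gbinv x c b) = if a = b then (1 : ℝ) else 0
  contDiffOn_gtil : ∀ α β, ContDiffOn ℝ (⊤ : ℕ∞) (fun y => gtil y α β) V
  gtil_symm : ∀ y ∈ V, ∀ α β, gtil y α β = gtil y β α
  gtil_mul_gtinv :
    ∀ y ∈ V, ∀ α β, (∑ γ, gtil y α γ * gtinv y γ β) = if α = β then (1 : ℝ) else 0
  contDiffOn_f : ContDiffOn ℝ (⊤ : ℕ∞) f U
  f_pos : ∀ x ∈ U, 0 < f x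

namespace WarpedProductData

variable {p q : ℕ}

section Components

variable (W : WarpedProductData p q)

def g : (Fin (p + q) → ℝ) → Fin (p + q) → Fin (p + q) → ℝ := wMet W.gbar W.gtil W.f

def ginv : (Fin (p + q) → ℝ) → Fin (p + q) → Fin (p + q) → ℝ := wMetInv W.gbinv W.gtinv W.f

def M : Set (Fin (p + q) → ℝ) := Mset W.U W.V

def gradf (c : Fin p) (x : Fin p → ℝ) : ℝ := ∑ b, W.gbinv x c b * pd W.f b x

def mixedCoeff (a b : Fin p) (x : Fin p → ℝ) : ℝ :=
  -(1 / 2) * ∑ c, W.gbar x a c * (pd (W.gradf c) b x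
    + (∑ d, Christoffel W.gbar W.gbinv c b d x * W.gradf d x)
    - pd W.f b x / (2 * W.f x) * W.gradf c x)

theorem isOpen_M : IsOpen W.M := isOpen_Mset W.isOpen_U W.isOpen_V

variable (z : Fin (p + q) → ℝ) (a b : Fin p) (α β : Fin q)

theorem g_base_base : W.g z (Fin.castAdd q a) (Fin.castAdd q b) = W.gbar (bpt z) a b := by
  simp [g, wMet, wPair]

theorem g_fiber_fiber :
    W.g z (Fin.natAdd p α) (Fin.natAdd p β) = W.f (bpt z) * W.gtil (fpt z) α β := by
  simp [g, wMet, wPair]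

theorem g_base_fiber : W.g z (Fin.castAdd q a) (Fin.natAdd p β) = 0 := by
  simp [g, wMet, wPair]

theorem g_fiber_base : W.g z (Fin.natAdd p α) (Fin.castAdd q b) = 0 := by
  simp [g, wMet, wPair]

theorem ginv_base_base :
    W.ginv z (Fin.castAdd q a) (Fin.castAdd q b) = W.gbinv (bpt z) a b := by
  simp [ginv, wMetInv, wPair]

theorem ginv_fiber_fiber :
    W.ginv z (Fin.natAdd p α) (Fin.natAdd p β) = (W.f (bpt z))⁻¹ * W.gtinv (fpt z) α β := by
  simp [ginv, wMetInv, wPair]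

theorem ginv_base_fiber : W.ginv z (Fin.castAdd q a) (Fin.natAdd p β) = 0 := by
  simp [ginv, wMetInv, wPair]

theorem ginv_fiber_base : W.ginv z (Fin.natAdd p α) (Fin.castAdd q b) = 0 := by
  simp [ginv, wMetInv, wPair]

variable {W} {x : Fin p → ℝ} {y : Fin q → ℝ}

theorem differentiableAt_f (hx : x ∈ W.U) : DifferentiableAt ℝ W.f x :=
  (W.contDiffOn_f.differentiableOn (by simp)).differentiableAt (W.isOpen_U.mem_nhds hx)

theorem differentiableAt_gtil (hy : y ∈ W.V) :
    DifferentiableAt ℝ (fun y => W.gtil y α β) y :=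
  ((W.contDiffOn_gtil α β).differentiableOn (by simp)).differentiableAt (W.isOpen_V.mem_nhds hy)

theorem differentiableAt_gradf (hx : x ∈ W.U) (c : Fin p) : DifferentiableAt ℝ (W.gradf c) x := by
  have hinv : ∀ x ∈ W.U, Matrix.of (W.gbar x) * Matrix.of (W.gbinv x) = 1 := fun x hx => by
    ext a b
    simpa [Matrix.mul_apply, Matrix.one_apply] using W.gbar_mul_gbinv x hx a b
  refine DifferentiableAt.fun_sum fun b _ => DifferentiableAt.mul ?_ ?_
  · exact ((contDiffOn_of_mul_eq_one W.contDiffOn_gbar hinv c b).differentiableOn (by simp))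
      |>.differentiableAt (W.isOpen_U.mem_nhds hx)
  · exact differentiableAt_pd W.isOpen_U W.contDiffOn_f (WithTop.coe_le_coe.2 le_top) b hx

theorem gtinv_mul_gtil (hy : y ∈ W.V) :
    ∑ γ, W.gtinv y α γ * W.gtil y γ β = if α = β then 1 else 0 :=
  sum_mul_eq_ite_comm (W.gtil_mul_gtinv y hy) α β

end Components

variable {W : WarpedProductData p q} {z : Fin (p + q) → ℝ}

section

variable {a b c : Fin p} {α β γ δ : Fin q}

theorem pd_g_base_base_base :
    pd (fun y => W.g y (Fin.castAdd q a) (Fin.castAdd q b)) (Fin.castAdd q c) z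
      = pd (fun x => W.gbar x a b) c (bpt z) := by
  simp only [g_base_base, pd_comp_bpt_castAdd (fun x => W.gbar x a b)]

theorem pd_g_base_base_fiber :
    pd (fun y => W.g y (Fin.castAdd q a) (Fin.castAdd q b)) (Fin.natAdd p γ) z = 0 := by
  simp only [g_base_base, pd_comp_bpt_natAdd (fun x => W.gbar x a b)]

theorem pd_g_base_fiber (j : Fin (p + q)) :
    pd (fun y => W.g y (Fin.castAdd q a) (Fin.natAdd p β)) j z = 0 := by
  simp only [g_base_fiber, pd_const]

theorem pd_g_fiber_base (j : Fin (p + q)) :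
    pd (fun y => W.g y (Fin.natAdd p α) (Fin.castAdd q b)) j z = 0 := by
  simp only [g_fiber_base, pd_const]

theorem pd_g_fiber_fiber_base (hz : z ∈ W.M) :
    pd (fun y => W.g y (Fin.natAdd p α) (Fin.natAdd p β)) (Fin.castAdd q c) z
      = pd W.f c (bpt z) * W.gtil (fpt z) α β := by
  simp only [g_fiber_fiber]
  exact pd_mul_comp_castAdd (differentiableAt_f hz.1) (differentiableAt_gtil α β hz.2) c

theorem pd_g_fiber_fiber_fiber (hz : z ∈ W.M) :
    pd (fun y => W.g y (Fin.natAdd p α) (Fin.natAdd p β)) (Fin.natAdd p γ) z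
      = W.f (bpt z) * pd (fun y => W.gtil y α β) γ (fpt z) := by
  simp only [g_fiber_fiber]
  exact pd_mul_comp_natAdd (differentiableAt_f hz.1) (differentiableAt_gtil α β hz.2) γ

theorem christoffel_base_base_base :
    Christoffel W.g W.ginv (Fin.castAdd q c) (Fin.castAdd q a) (Fin.castAdd q b) z
      = Christoffel W.gbar W.gbinv c a b (bpt z) := by
  rw [Christoffel, Christoffel, Fin.sum_univ_add]
  simp only [ginv_base_base, ginv_base_fiber, pd_g_base_base_base, zero_mul, sum_const_zero,
    add_zero]

theorem christoffel_fiber_base_base :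
    Christoffel W.g W.ginv (Fin.natAdd p γ) (Fin.castAdd q a) (Fin.castAdd q b) z = 0 := by
  rw [Christoffel, Fin.sum_univ_add]
  simp only [ginv_fiber_base, ginv_fiber_fiber, pd_g_fiber_base, pd_g_base_fiber,
    pd_g_base_base_fiber, zero_mul, sum_const_zero, add_zero, sub_zero, mul_zero]

theorem christoffel_base_base_fiber :
    Christoffel W.g W.ginv (Fin.castAdd q c) (Fin.castAdd q a) (Fin.natAdd p β) z = 0 := by
  rw [Christoffel, Fin.sum_univ_add]
  simp only [ginv_base_base, ginv_base_fiber, pd_g_base_fiber, pd_g_base_base_fiber, zero_mul,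
    sum_const_zero, add_zero, sub_zero, mul_zero]

theorem christoffel_base_fiber_base :
    Christoffel W.g W.ginv (Fin.castAdd q c) (Fin.natAdd p β) (Fin.castAdd q a) z = 0 := by
  rw [Christoffel, Fin.sum_univ_add]
  simp only [ginv_base_base, ginv_base_fiber, pd_g_fiber_base, pd_g_base_base_fiber, zero_mul,
    sum_const_zero, add_zero, sub_zero, mul_zero]

theorem christoffel_base_fiber_fiber (hz : z ∈ W.M) :
    Christoffel W.g W.ginv (Fin.castAdd q c) (Fin.natAdd p α) (Fin.natAdd p β) z
      = -(1 / 2) * W.gradf c (bpt z) * W.gtil (fpt z) α β := by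
  rw [Christoffel, Fin.sum_univ_add]
  simp only [ginv_base_base, ginv_base_fiber, pd_g_base_fiber, pd_g_fiber_base,
    pd_g_fiber_fiber_base hz, zero_mul, sum_const_zero, add_zero, zero_sub, gradf,
    sum_mul, mul_sum]
  exact sum_congr rfl fun b _ => by ring

theorem christoffel_fiber_fiber_fiber (hz : z ∈ W.M) :
    Christoffel W.g W.ginv (Fin.natAdd p γ) (Fin.natAdd p α) (Fin.natAdd p β) z
      = Christoffel W.gtil W.gtinv γ α β (fpt z) := by
  have hf : W.f (bpt z) ≠ 0 := (W.f_pos _ hz.1).ne'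
  rw [Christoffel, Christoffel, Fin.sum_univ_add]
  simp only [ginv_fiber_base, ginv_fiber_fiber, pd_g_fiber_fiber_fiber hz, zero_mul,
    sum_const_zero, zero_add]
  congr 1
  exact sum_congr rfl fun _ _ => by field_simp

theorem christoffel_fiber_base_fiber (hz : z ∈ W.M) :
    Christoffel W.g W.ginv (Fin.natAdd p γ) (Fin.castAdd q a) (Fin.natAdd p β) z
      = if γ = β then pd W.f a (bpt z) / (2 * W.f (bpt z)) else 0 := by
  have hf : W.f (bpt z) ≠ 0 := (W.f_pos _ hz.1).ne'
  rw [Christoffel, Fin.sum_univ_add]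
  simp only [ginv_fiber_base, ginv_fiber_fiber, pd_g_base_fiber, pd_g_fiber_fiber_base hz,
    zero_mul, sum_const_zero, zero_add, add_zero, sub_zero]
  calc _ = (1 / 2) * ((W.f (bpt z))⁻¹ * pd W.f a (bpt z)) *
        ∑ δ, W.gtinv (fpt z) γ δ * W.gtil (fpt z) δ β := by
        simp only [mul_sum]
        exact sum_congr rfl fun _ _ => by ring
    _ = _ := by
      rw [gtinv_mul_gtil γ β hz.2]
      split_ifs
      · field_simp
      · ring

theorem christoffel_fiber_fiber_base (hz : z ∈ W.M) :
    Christoffel W.g W.ginv (Fin.natAdd p γ) (Fin.natAdd p β) (Fin.castAdd q a) z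
      = if γ = β then pd W.f a (bpt z) / (2 * W.f (bpt z)) else 0 := by
  rw [← christoffel_fiber_base_fiber hz, Christoffel, Christoffel, Fin.sum_univ_add,
    Fin.sum_univ_add]
  simp only [ginv_fiber_base, pd_g_base_fiber, pd_g_fiber_base, pd_g_fiber_fiber_base hz,
    W.gtil_symm _ hz.2 β, zero_mul, sum_const_zero, zero_add, add_zero, sub_zero]

theorem pd_christoffel_base_fiber_fiber_fiber (hz : z ∈ W.M) :
    pd (Christoffel W.g W.ginv (Fin.castAdd q c) (Fin.natAdd p γ) (Fin.natAdd p α))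
        (Fin.natAdd p β) z
      = -(1 / 2) * W.gradf c (bpt z) * pd (fun y => W.gtil y γ α) β (fpt z) := by
  have h : Set.EqOn (Christoffel W.g W.ginv (Fin.castAdd q c) (Fin.natAdd p γ) (Fin.natAdd p α))
      (fun y => -(1 / 2) * W.gradf c (bpt y) * W.gtil (fpt y) γ α) W.M :=
    fun y hy => christoffel_base_fiber_fiber hy
  rw [pd_congr_of_eqOn W.isOpen_M hz h, pd_mul_comp_natAdd
    ((differentiableAt_gradf hz.1 c).const_mul _) (differentiableAt_gtil γ α hz.2)]

theorem pd_christoffel_base_fiber_fiber_base (hz : z ∈ W.M) :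
    pd (Christoffel W.g W.ginv (Fin.castAdd q c) (Fin.natAdd p γ) (Fin.natAdd p α))
        (Fin.castAdd q b) z
      = -(1 / 2) * pd (W.gradf c) b (bpt z) * W.gtil (fpt z) γ α := by
  have h : Set.EqOn (Christoffel W.g W.ginv (Fin.castAdd q c) (Fin.natAdd p γ) (Fin.natAdd p α))
      (fun y => -(1 / 2) * W.gradf c (bpt y) * W.gtil (fpt y) γ α) W.M :=
    fun y hy => christoffel_base_fiber_fiber hy
  rw [pd_congr_of_eqOn W.isOpen_M hz h, pd_mul_comp_castAdd
    ((differentiableAt_gradf hz.1 c).const_mul _) (differentiableAt_gtil γ α hz.2), pd_const_mul]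

theorem pd_christoffel_fiber_fiber_fiber_fiber (hz : z ∈ W.M) :
    pd (Christoffel W.g W.ginv (Fin.natAdd p γ) (Fin.natAdd p α) (Fin.natAdd p β))
        (Fin.natAdd p δ) z
      = pd (Christoffel W.gtil W.gtinv γ α β) δ (fpt z) := by
  rw [pd_congr_of_eqOn W.isOpen_M hz (fun y hy => christoffel_fiber_fiber_fiber hy),
    pd_comp_fpt_natAdd (Christoffel W.gtil W.gtinv γ α β)]

theorem pd_christoffel_fiber_fiber_base_fiber (hz : z ∈ W.M) :
    pd (Christoffel W.g W.ginv (Fin.natAdd p γ) (Fin.natAdd p β) (Fin.castAdd q a))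
        (Fin.natAdd p α) z = 0 := by
  rw [pd_congr_of_eqOn W.isOpen_M hz (fun y hy => christoffel_fiber_fiber_base hy),
    pd_comp_bpt_natAdd (fun x => if γ = β then pd W.f a x / (2 * W.f x) else 0)]

theorem pd_christoffel_base_base_base_fiber (hz : z ∈ W.M) :
    pd (Christoffel W.g W.ginv (Fin.castAdd q c) (Fin.castAdd q a) (Fin.castAdd q b))
        (Fin.natAdd p α) z = 0 := by
  rw [pd_congr_of_eqOn W.isOpen_M hz (fun y _ => christoffel_base_base_base),
    pd_comp_bpt_natAdd (Christoffel W.gbar W.gbinv c a b)]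

theorem pd_christoffel_base_base_fiber (hz : z ∈ W.M) (j : Fin (p + q)) :
    pd (Christoffel W.g W.ginv (Fin.castAdd q c) (Fin.castAdd q a) (Fin.natAdd p β)) j z = 0 :=
  pd_eq_zero_of_eqOn W.isOpen_M hz (fun _ _ => christoffel_base_base_fiber) j

theorem pd_christoffel_base_fiber_base (hz : z ∈ W.M) (j : Fin (p + q)) :
    pd (Christoffel W.g W.ginv (Fin.castAdd q c) (Fin.natAdd p β) (Fin.castAdd q a)) j z = 0 :=
  pd_eq_zero_of_eqOn W.isOpen_M hz (fun _ _ => christoffel_base_fiber_base) j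

theorem riem_base_fiber_fiber_fiber (hz : z ∈ W.M) :
    Riem W.g W.ginv z (Fin.castAdd q a) (Fin.natAdd p α) (Fin.natAdd p β) (Fin.natAdd p γ)
      = 0 := by
  rw [Riem, Fin.sum_univ_add]
  simp only [g_base_fiber, zero_mul, sum_const_zero, add_zero]
  refine sum_eq_zero fun b _ => ?_
  simp only [Fin.sum_univ_add, pd_christoffel_base_fiber_fiber_fiber hz,
    christoffel_base_fiber_base, christoffel_base_fiber_fiber hz,
    christoffel_fiber_fiber_fiber hz, zero_mul, sum_const_zero, zero_add, mul_assoc, ← mul_sum,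
    sum_mul_christoffel (W.gtil_mul_gtinv _ hz.2)]
  rw [pd_congr_of_eqOn W.isOpen_V hz.2 (fun y hy => W.gtil_symm y hy γ β) α]
  ring

theorem riem_base_base_fiber_fiber (hz : z ∈ W.M) :
    Riem W.g W.ginv z (Fin.castAdd q a) (Fin.castAdd q b) (Fin.natAdd p β) (Fin.natAdd p γ)
      = 0 := by
  rw [Riem, Fin.sum_univ_add]
  simp only [g_base_fiber, zero_mul, sum_const_zero, add_zero]
  refine sum_eq_zero fun c _ => ?_
  simp only [Fin.sum_univ_add, pd_christoffel_base_fiber_base hz, christoffel_base_fiber_base,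
    christoffel_base_fiber_fiber hz, christoffel_fiber_fiber_base hz, mul_ite, mul_zero,
    sum_const_zero, zero_add, sub_zero, sum_ite_eq', mem_univ, if_true, W.gtil_symm _ hz.2 β γ]
  ring

theorem riem_base_base_base_fiber (hz : z ∈ W.M) :
    Riem W.g W.ginv z (Fin.castAdd q b) (Fin.castAdd q a) (Fin.castAdd q c) (Fin.natAdd p γ)
      = 0 := by
  rw [Riem, Fin.sum_univ_add]
  simp only [g_base_fiber, zero_mul, sum_const_zero, add_zero]
  refine sum_eq_zero fun d _ => ?_
  simp only [Fin.sum_univ_add, pd_christoffel_base_fiber_base hz,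
    pd_christoffel_base_base_base_fiber hz, christoffel_base_fiber_base,
    christoffel_base_base_fiber, christoffel_fiber_base_base, mul_zero, zero_mul,
    sum_const_zero, add_zero, sub_zero, mul_zero]

theorem riem_fiber_base_fiber_fiber (hz : z ∈ W.M) :
    Riem W.g W.ginv z (Fin.natAdd p δ) (Fin.castAdd q a) (Fin.natAdd p β) (Fin.natAdd p γ)
      = 0 := by
  rw [Riem, Fin.sum_univ_add]
  simp only [g_fiber_base, zero_mul, sum_const_zero, zero_add]
  refine sum_eq_zero fun ε _ => ?_
  simp only [Fin.sum_univ_add, pd_christoffel_fiber_fiber_base_fiber hz,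
    christoffel_base_fiber_base, christoffel_fiber_fiber_fiber hz,
    christoffel_fiber_fiber_base hz, mul_zero, mul_ite, sum_const_zero, zero_add, sub_zero,
    sum_ite_eq', mem_univ, if_true,
    christoffel_comm W.isOpen_V W.gtil_symm hz.2 ε β γ]
  ring

theorem riem_base_fiber_base_fiber (hz : z ∈ W.M) :
    Riem W.g W.ginv z (Fin.castAdd q a) (Fin.natAdd p α) (Fin.castAdd q b) (Fin.natAdd p γ)
      = W.mixedCoeff a b (bpt z) * W.gtil (fpt z) γ α := by
  rw [Riem, Fin.sum_univ_add]
  simp only [g_base_fiber, g_base_base, zero_mul, sum_const_zero, add_zero]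
  rw [mixedCoeff, mul_assoc, sum_mul, mul_sum]
  refine sum_congr rfl fun c _ => ?_
  simp only [Fin.sum_univ_add, pd_christoffel_base_fiber_fiber_base hz,
    pd_christoffel_base_base_fiber hz, christoffel_base_base_base, christoffel_base_fiber_fiber hz,
    christoffel_base_base_fiber, christoffel_base_fiber_base, christoffel_fiber_base_fiber hz,
    mul_ite, mul_zero, zero_mul, sum_const_zero, zero_add, add_zero, sub_zero,
    sum_ite_eq', mem_univ, if_true]
  have hsum : ∑ d, Christoffel W.gbar W.gbinv c b d (bpt z) *
      (-(1 / 2) * W.gradf d (bpt z) * W.gtil (fpt z) γ α)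
      = -(1 / 2) * W.gtil (fpt z) γ α *
        ∑ d, Christoffel W.gbar W.gbinv c b d (bpt z) * W.gradf d (bpt z) := by
    rw [mul_sum]
    exact sum_congr rfl fun _ _ => by ring
  rw [hsum]
  ring

theorem sum_pd_div_mul_gradf_eq_Pw {x : Fin p → ℝ} (hx : x ∈ W.U) :
    ∑ c, pd W.f c x / (2 * W.f x) * W.gradf c x = 2 * W.f x * Pw W.gbinv W.f x := by
  have hf := (W.f_pos x hx).ne'
  simp only [Pw, gradf, mul_sum]
  refine sum_congr rfl fun c _ => sum_congr rfl fun b _ => ?_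
  field_simp
  ring

theorem riem_fiber_fiber_fiber_fiber (hz : z ∈ W.M) :
    Riem W.g W.ginv z (Fin.natAdd p α) (Fin.natAdd p β) (Fin.natAdd p γ) (Fin.natAdd p δ)
      = W.f (bpt z) * Riem W.gtil W.gtinv (fpt z) α β γ δ
        + W.f (bpt z) ^ 2 * Pw W.gbinv W.f (bpt z) * Gt W.gtil (fpt z) α β γ δ := by
  rw [Riem, Riem, Fin.sum_univ_add]
  simp only [g_fiber_base, g_fiber_fiber, zero_mul, sum_const_zero, zero_add, Fin.sum_univ_add,
    pd_christoffel_fiber_fiber_fiber_fiber hz, christoffel_fiber_fiber_base hz,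
    christoffel_base_fiber_fiber hz, christoffel_fiber_fiber_fiber hz, ite_mul, zero_mul,
    sum_ite_irrel, sum_const_zero]
  have hP : ∀ G : ℝ, ∑ c, pd W.f c (bpt z) / (2 * W.f (bpt z)) * (-(1 / 2) * W.gradf c (bpt z) * G)
      = -(W.f (bpt z) * Pw W.gbinv W.f (bpt z)) * G := fun G => by
    calc _ = -(1 / 2) * G * ∑ c, pd W.f c (bpt z) / (2 * W.f (bpt z)) * W.gradf c (bpt z) := by
          rw [mul_sum]
          exact sum_congr rfl fun _ _ => by ring
      _ = _ := by
          rw [sum_pd_div_mul_gradf_eq_Pw hz.1]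
          ring
  simp only [hP]
  simp only [mul_add, mul_sub, sum_add_distrib, sum_sub_distrib, mul_ite, mul_zero,
    sum_ite_eq', mem_univ, if_true, mul_assoc, ← mul_sum]
  rw [Gt, W.gtil_symm _ hz.2 δ β, W.gtil_symm _ hz.2 γ β]
  ring

theorem ric_base_fiber (hz : z ∈ W.M) :
    Ric W.g W.ginv z (Fin.castAdd q a) (Fin.natAdd p γ) = 0 := by
  rw [Ric, Fin.sum_univ_add]
  simp only [Fin.sum_univ_add, ginv_base_fiber, ginv_fiber_base, riem_base_base_base_fiber hz,
    riem_fiber_base_fiber_fiber hz, mul_zero, zero_mul, sum_const_zero, add_zero]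

end

theorem cov4_riem_base_fiber_fiber_fiber_eq_zero_of_sgk
    {piF phiF psiF thetaF : (Fin (p + q) → ℝ) → Fin (p + q) → ℝ}
    (hsgk : SGK W.g W.ginv piF phiF psiF thetaF z) (hz : z ∈ W.M) (a : Fin p) (α β γ δ : Fin q) :
    cov4 W.g W.ginv (Riem W.g W.ginv) z (Fin.castAdd q a) (Fin.natAdd p β) (Fin.natAdd p γ)
      (Fin.natAdd p δ) (Fin.natAdd p α) = 0 := by
  have hS : ∀ ε, Ric W.g W.ginv z (Fin.castAdd q a) (Fin.natAdd p ε) = 0 :=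
    fun _ => ric_base_fiber hz
  have hg : ∀ ε, W.g z (Fin.castAdd q a) (Fin.natAdd p ε) = 0 := fun _ => g_base_fiber ..
  rw [hsgk, riem_base_fiber_fiber_fiber hz, kn_base_fiber_fiber_fiber hS hS,
    kn_base_fiber_fiber_fiber hg hS, kn_base_fiber_fiber_fiber hg hg]
  ring

theorem cov4_riem_base_fiber_fiber_fiber (hz : z ∈ W.M) (a : Fin p) (α β γ δ : Fin q) :
    cov4 W.g W.ginv (Riem W.g W.ginv) z (Fin.castAdd q a) (Fin.natAdd p β) (Fin.natAdd p γ)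
        (Fin.natAdd p δ) (Fin.natAdd p α)
      = -(pd W.f a (bpt z) / (2 * W.f (bpt z)))
          * Riem W.g W.ginv z (Fin.natAdd p α) (Fin.natAdd p β) (Fin.natAdd p γ) (Fin.natAdd p δ)
        - (1 / 2) * (∑ b, W.gradf b (bpt z) * W.mixedCoeff a b (bpt z))
          * Gt W.gtil (fpt z) α β γ δ := by
  have hR : ∀ b, Riem W.g W.ginv z (Fin.castAdd q a) (Fin.natAdd p β) (Fin.natAdd p γ)
      (Fin.castAdd q b) = W.mixedCoeff a b (bpt z) * -W.gtil (fpt z) γ β := fun b => by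
    rw [riem_antisymm, riem_base_fiber_base_fiber hz, mul_neg]
  have hμ : ∀ u v : ℝ, ∑ b, -(1 / 2) * W.gradf b (bpt z) * u * (W.mixedCoeff a b (bpt z) * v)
      = -(1 / 2) * u * v * ∑ b, W.gradf b (bpt z) * W.mixedCoeff a b (bpt z) := fun u v => by
    rw [mul_sum]
    exact sum_congr rfl fun _ _ => by ring
  rw [cov4, pd_eq_zero_of_eqOn W.isOpen_M hz (fun y hy => riem_base_fiber_fiber_fiber hy)]
  simp only [Fin.sum_univ_add, christoffel_base_fiber_base, christoffel_fiber_fiber_base hz,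
    christoffel_base_fiber_fiber hz, christoffel_fiber_fiber_fiber hz,
    riem_base_fiber_fiber_fiber hz, riem_base_base_fiber_fiber hz, riem_base_fiber_base_fiber hz,
    hR, hμ, zero_mul, mul_zero, ite_mul, sum_const_zero, zero_add, add_zero, sub_zero, zero_sub,
    sum_ite_eq', mem_univ, if_true]
  rw [Gt, W.gtil_symm _ hz.2 β γ, W.gtil_symm _ hz.2 β δ]
  ring

theorem riem_fiber_eq_mul_gt_of_sgk {piF phiF psiF thetaF : (Fin (p + q) → ℝ) → Fin (p + q) → ℝ}
    (hsgk : SGK W.g W.ginv piF phiF psiF thetaF z) (hz : z ∈ W.M) {a : Fin p}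
    (ha : pd W.f a (bpt z) ≠ 0) (α β γ δ : Fin q) :
    Riem W.gtil W.gtinv (fpt z) α β γ δ
      = -(W.f (bpt z) * Pw W.gbinv W.f (bpt z)
          + (∑ b, W.gradf b (bpt z) * W.mixedCoeff a b (bpt z)) / pd W.f a (bpt z))
        * Gt W.gtil (fpt z) α β γ δ := by
  have hf := (W.f_pos _ hz.1).ne'
  have h := cov4_riem_base_fiber_fiber_fiber hz a α β γ δ
  rw [cov4_riem_base_fiber_fiber_fiber_eq_zero_of_sgk hsgk hz, riem_fiber_fiber_fiber_fiber hz] at h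
  field_simp at h ⊢
  linear_combination h

end WarpedProductData

theorem fiber_of_warped_SGK_constant_curvature_general
    {p q : ℕ}
    (U : Set (Fin p → ℝ)) (V : Set (Fin q → ℝ))
    (hU : IsOpen U) (hV : IsOpen V)
    (gbar gbinv : (Fin p → ℝ) → Fin p → Fin p → ℝ)
    (gtil gtinv : (Fin q → ℝ) → Fin q → Fin q → ℝ)
    (f : (Fin p → ℝ) → ℝ)
    (hgb : ∀ a b, ContDiffOn ℝ (⊤ : ℕ∞) (fun x => gbar x a b) U)
    (hgbi : ∀ x ∈ U, ∀ a b, (∑ c, gbar x a c * gbinv x c b) = if a = b then (1 : ℝ) else 0)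
    (hgt : ∀ a b, ContDiffOn ℝ (⊤ : ℕ∞) (fun y => gtil y a b) V)
    (hgts : ∀ y ∈ V, ∀ a b, gtil y a b = gtil y b a)
    (hgti : ∀ y ∈ V, ∀ a b, (∑ c, gtil y a c * gtinv y c b) = if a = b then (1 : ℝ) else 0)
    (hf : ContDiffOn ℝ (⊤ : ℕ∞) f U)
    (hfpos : ∀ x ∈ U, 0 < f x)
    (piF phiF psiF thetaF : (Fin (p + q) → ℝ) → Fin (p + q) → ℝ)
    (hsgk : ∀ z ∈ Mset U V, SGK (wMet gbar gtil f) (wMetInv gbinv gtinv f) piF phiF psiF thetaF z) :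
    ∀ z ∈ Mset U V, (∃ a : Fin p, pd f a (bpt z) ≠ 0) →
      ∃ c : ℝ, ∀ α β γ δ : Fin q,
        Riem gtil gtinv (fpt z) α β γ δ = c * Gt gtil (fpt z) α β γ δ := by
  rintro z hz ⟨a, ha⟩
  let W : WarpedProductData p q :=
    ⟨U, V, hU, hV, gbar, gbinv, gtil, gtinv, f, hgb, hgbi, hgt, hgts, hgti, hf, hfpos⟩
  exact ⟨_, WarpedProductData.riem_fiber_eq_mul_gt_of_sgk (W := W) (hsgk z hz) hz ha⟩

/-- Corollary 4.1(vi): the fiber of a warped product SGK manifold is of constant curvature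
wherever df is nonzero. -/
theorem fiber_of_warped_SGK_constant_curvature
    {p q : ℕ} (hp : 1 ≤ p) (hq : 1 ≤ q)
    (U : Set (Fin p → ℝ)) (V : Set (Fin q → ℝ))
    (hU : IsOpen U) (hV : IsOpen V)
    (gbar gbinv : (Fin p → ℝ) → Fin p → Fin p → ℝ)
    (gtil gtinv : (Fin q → ℝ) → Fin q → Fin q → ℝ)
    (f : (Fin p → ℝ) → ℝ)
    (hgb : ∀ a b, ContDiffOn ℝ (⊤ : ℕ∞) (fun x => gbar x a b) U)
    (hgbs : ∀ x ∈ U, ∀ a b, gbar x a b = gbar x b a)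
    (hgbi : ∀ x ∈ U, ∀ a b, (∑ c, gbar x a c * gbinv x c b) = if a = b then (1 : ℝ) else 0)
    (hgt : ∀ a b, ContDiffOn ℝ (⊤ : ℕ∞) (fun y => gtil y a b) V)
    (hgts : ∀ y ∈ V, ∀ a b, gtil y a b = gtil y b a)
    (hgti : ∀ y ∈ V, ∀ a b, (∑ c, gtil y a c * gtinv y c b) = if a = b then (1 : ℝ) else 0)
    (hf : ContDiffOn ℝ (⊤ : ℕ∞) f U)
    (hfpos : ∀ x ∈ U, 0 < f x)
    (piF phiF psiF thetaF : (Fin (p + q) → ℝ) → Fin (p + q) → ℝ)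
    (hpiF : ∀ m, ContDiffOn ℝ (⊤ : ℕ∞) (fun z => piF z m) (Mset U V))
    (hphiF : ∀ m, ContDiffOn ℝ (⊤ : ℕ∞) (fun z => phiF z m) (Mset U V))
    (hpsiF : ∀ m, ContDiffOn ℝ (⊤ : ℕ∞) (fun z => psiF z m) (Mset U V))
    (hthetaF : ∀ m, ContDiffOn ℝ (⊤ : ℕ∞) (fun z => thetaF z m) (Mset U V))
    (hsgk : ∀ z ∈ Mset U V, SGK (wMet gbar gtil f) (wMetInv gbinv gtinv f) piF phiF psiF thetaF z) :
    ∀ z ∈ Mset U V, (∃ a : Fin p, pd f a (bpt z) ≠ 0) →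
      ∃ c : ℝ, ∀ α β γ δ : Fin q,
        Riem gtil gtinv (fpt z) α β γ δ = c * Gt gtil (fpt z) α β γ δ :=
  fiber_of_warped_SGK_constant_curvature_general U V hU hV gbar gbinv gtil gtinv f hgb hgbi hgt hgts
    hgti hf hfpos piF phiF psiF thetaF hsgk
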